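/- Let p be a probability distribution on {1,2} with p(x) > 0 for x = 1,2, let ω_pk ∈ ℝ² with 0 ≤ ω_pk ≤ (1,1) componentwise, let (α,β,γ) be a Trade-off Function with max-peak energies ω_pk for input distribution p, and let (E,ω) ∈ Q_{ω_pk}. Define ξ(a,x) = (αₓ + aβₓ)/p(x) and T(a,x) = ξ(a,x) + γ·ω + log₂((1+aEₓ)/2). Set ξ⁺ = max_{a,x} ξ(a,x), ξ⁻ = min_{a,x} ξ(a,x), γ̄ = γ₁+γ₂, and V = max{(ξ⁺+γ̄)², (ξ⁻+γ̄)²} + 2·max{−(ξ⁻+γ̄), 0} + (8/e²)·(log₂ e)². Then ∑_{x=1,2} ∑_{a=±1} p(x)·((1+aEₓ)/2)·T(a,x)² ≤ V (with 0·(log₂0)² = 0 and 0·log₂0 = 0), and T(a,x) ≤ ξ⁺ for every a, x with (1+aEₓ)/2 > 0. -/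

import Mathlib

/-!
Write `q(a|x) = (1 + a Eₓ)/2` and split `T = Y + δ + L` with `Y = ξ + γ̄`, `δ = γ·ω - γ̄` and
`L = log₂ q`. Since `γ ≤ 0` and `ω ≤ 1` we have `δ ≥ 0`, and `L ≤ 0`. Under the joint distribution
`p(x) q(a|x)` the estimator `ξ` has mean `∑ₓ (αₓ + βₓ Eₓ)`, so the trade-off inequality says
exactly that `𝔼T ≤ 0`. Expanding `𝔼T²`, the terms carrying `δ` add up to
`δ (δ + 2𝔼Y + 2𝔼L) ≤ -δ² ≤ 0`; the cross term obeys `𝔼[YL] ≤ (ξ⁻ + γ̄) 𝔼L ≤ max (-(ξ⁻ + γ̄)) 0`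
because `-1 ≤ 𝔼L ≤ 0` (a binary entropy is at most one bit); `𝔼Y² ≤ max ((ξ⁺+γ̄)²) ((ξ⁻+γ̄)²)`;
and `𝔼L² ≤ 8/e² (log₂ e)²` since `q log² q ≤ 4/e²` on `[0, 1]`. The pointwise bound on `T` only
uses `γ·ω ≤ 0` and `L ≤ 0`. The constraints `|Eₓ| ≤ 1`, `ωₓ ≥ 0` hold for a quantum
representation because traces of products of positive semidefinite matrices are nonnegative,
and they survive convex combinations.
-/

open scoped ComplexOrder

noncomputable section

/-- A behaviour `(E, ω)` admits a (finite-dimensional) quantum representation. -/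
def IsQuantumRep (E ω : Fin 2 → ℝ) : Prop :=
  ∃ (d : ℕ) (ρ : Fin 2 → Matrix (Fin d) (Fin d) ℂ)
    (M O : Matrix (Fin d) (Fin d) ℂ) (v : Fin d → ℂ),
    (∀ x, (ρ x).PosSemidef) ∧ (∀ x, (ρ x).trace = 1) ∧
    M.IsHermitian ∧ (1 - M).PosSemidef ∧ (1 + M).PosSemidef ∧
    O.IsHermitian ∧ O.mulVec v = 0 ∧ (∑ i, Complex.normSq (v i)) = 1 ∧
    (O - (1 - Matrix.vecMulVec v (star v))).PosSemidef ∧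
    (∀ x, (ρ x * M).trace = (E x : ℂ)) ∧
    (∀ x, ((ρ x * O).trace).re ≤ ω x)

/-- The quantum set `Q`: all finite convex combinations of behaviours with a
quantum representation. -/
def QuantumSet : Set ((Fin 2 → ℝ) × (Fin 2 → ℝ)) :=
  convexHull ℝ {b | IsQuantumRep b.1 b.2}

/-- The quantum set with max-peak energy constraint `ω ≤ ω_pk`. -/
def QuantumSetPk (ωpk : Fin 2 → ℝ) : Set ((Fin 2 → ℝ) × (Fin 2 → ℝ)) :=
  {b | b ∈ QuantumSet ∧ ∀ x, b.2 x ≤ ωpk x}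

/-- The conditional Shannon entropy `H(E)` of the output given the input,
for input distribution `p` (with the convention `0 · log₂ 0 = 0`). -/
def Hent (p E : Fin 2 → ℝ) : ℝ :=
  -∑ x, p x * (((1 + E x) / 2) * Real.logb 2 ((1 + E x) / 2) +
               ((1 - E x) / 2) * Real.logb 2 ((1 - E x) / 2))
/-- A Trade-off Function with max-peak energies `ωpk` for input distribution `p`:
a linear lower bound on the conditional Shannon entropy over `Q_{ω_pk}`. -/
def IsTF (p ωpk α β γ : Fin 2 → ℝ) : Prop :=
  (∀ x, γ x ≤ 0) ∧
  ∀ E ω : Fin 2 → ℝ, (E, ω) ∈ QuantumSetPk ωpk →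
    (α 0 + α 1) + (∑ x, β x * E x) + (∑ x, γ x * ω x) ≤ Hent p E

/-- The unbiased estimator `ξ(a, x) = (αₓ + a βₓ) / p(x)`. -/
def xiFun (p α β : Fin 2 → ℝ) (a : ℝ) (x : Fin 2) : ℝ :=
  (α x + a * β x) / p x

/-- `ξ⁺ = max_{a,x} ξ(a,x)`. -/
def xiPlus (p α β : Fin 2 → ℝ) : ℝ :=
  max (max (xiFun p α β 1 0) (xiFun p α β 1 1))
      (max (xiFun p α β (-1) 0) (xiFun p α β (-1) 1))

/-- `ξ⁻ = min_{a,x} ξ(a,x)`. -/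
def xiMinus (p α β : Fin 2 → ℝ) : ℝ :=
  min (min (xiFun p α β 1 0) (xiFun p α β 1 1))
      (min (xiFun p α β (-1) 0) (xiFun p α β (-1) 1))

/-- The variance bound
`V = max{(ξ⁺+γ̄)², (ξ⁻+γ̄)²} + 2 max{−(ξ⁻+γ̄), 0} + (8/e²)(log₂ e)²`. -/
def Vbound (p α β γ : Fin 2 → ℝ) : ℝ :=
  max ((xiPlus p α β + (γ 0 + γ 1)) ^ 2) ((xiMinus p α β + (γ 0 + γ 1)) ^ 2) +
    2 * max (-(xiMinus p α β + (γ 0 + γ 1))) 0 +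
    (8 / Real.exp 1 ^ 2) * Real.logb 2 (Real.exp 1) ^ 2

/-- The finite-statistics error term
`t = √(2V)·√(log₂(1/ε_t)/n) + (ξ⁺/3)·(log₂(1/ε_t)/n)`. -/
def tErr (p α β γ : Fin 2 → ℝ) (εt : ℝ) (n : ℕ) : ℝ :=
  Real.sqrt (2 * Vbound p α β γ) * Real.sqrt (Real.logb 2 (1 / εt) / n) +
    (xiPlus p α β / 3) * (Real.logb 2 (1 / εt) / n)

open Finset

namespace Matrix

variable {n 𝕜 : Type*} [Fintype n] [RCLike 𝕜]

lemma PosSemidef.trace_mul_nonneg {A B : Matrix n n 𝕜} (hA : A.PosSemidef)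
    (hB : B.PosSemidef) : 0 ≤ (A * B).trace := by
  classical
  open scoped MatrixOrder in
  obtain ⟨X, rfl⟩ := CStarAlgebra.nonneg_iff_eq_star_mul_self.mp hA.nonneg
  rw [star_eq_conjTranspose, Matrix.mul_assoc, trace_mul_comm]
  exact (hB.mul_mul_conjTranspose_same X).trace_nonneg

-- `1 - v vᴴ` is an idempotent Hermitian matrix, hence equal to `(1 - v vᴴ)ᴴ (1 - v vᴴ)`.
lemma posSemidef_one_sub_vecMulVec_self [DecidableEq n] {v : n → 𝕜} (hv : star v ⬝ᵥ v = 1) :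
    (1 - vecMulVec v (star v)).PosSemidef := by
  set P := vecMulVec v (star v)
  have hP : Pᴴ = P := by simp [P]
  have hPP : P * P = P := by simp only [P, vecMulVec_mul_vecMulVec, hv, one_smul]
  have hQ : (1 - P)ᴴ * (1 - P) = 1 - P := by
    rw [conjTranspose_sub, conjTranspose_one, hP, sub_mul, mul_sub, mul_sub, hPP]
    simp
  exact hQ ▸ posSemidef_conjTranspose_mul_self (1 - P)

end Matrix

namespace Real

lemma mul_log_sq_le {q : ℝ} (h0 : 0 ≤ q) (h1 : q ≤ 1) : q * log q ^ 2 ≤ 4 / exp 1 ^ 2 := by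
  rcases h0.eq_or_lt with rfl | hq
  · rw [zero_mul]; positivity
  set y := -log q / 2
  have hy : 0 ≤ y := by simp only [y]; linarith [log_nonpos h0 h1]
  have hexp : exp (-y) ^ 2 = q := by
    rw [← exp_nat_mul, show ((2 : ℕ) : ℝ) * -y = log q by simp only [y]; push_cast; ring,
      exp_log hq]
  calc q * log q ^ 2 = 4 * (y * exp (-y)) ^ 2 := by rw [mul_pow, hexp]; ring
    _ ≤ 4 * exp (-1) ^ 2 := by
      gcongr
      exact mul_exp_neg_le_exp_neg_one y
    _ = 4 / exp 1 ^ 2 := by rw [exp_neg, inv_pow, div_eq_mul_inv]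

lemma mul_logb_sq_le (b : ℝ) {q : ℝ} (h0 : 0 ≤ q) (h1 : q ≤ 1) :
    q * logb b q ^ 2 ≤ 4 / exp 1 ^ 2 * logb b (exp 1) ^ 2 :=
  calc q * logb b q ^ 2 = q * log q ^ 2 / log b ^ 2 := by rw [logb]; ring
    _ ≤ 4 / exp 1 ^ 2 / log b ^ 2 := by gcongr; exact mul_log_sq_le h0 h1
    _ = 4 / exp 1 ^ 2 * logb b (exp 1) ^ 2 := by rw [logb, log_exp]; ring

lemma neg_mul_logb_two_add_mul_logb_two_le_one {q r : ℝ} (h : q + r = 1) :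
    -(q * logb 2 q + r * logb 2 r) ≤ 1 := by
  obtain rfl : r = 1 - q := by linarith
  have hlog2 : 0 < log 2 := log_pos one_lt_two
  calc -(q * logb 2 q + (1 - q) * logb 2 (1 - q)) = binEntropy q / log 2 := by
        rw [binEntropy_eq_negMulLog_add_negMulLog_one_sub, negMulLog, negMulLog, logb, logb]
        ring
    _ ≤ 1 := (div_le_one hlog2).2 binEntropy_le_log_two

end Real

lemma IsQuantumRep.mem_Icc_and_nonneg {E ω : Fin 2 → ℝ} (h : IsQuantumRep E ω) (x : Fin 2) :
    E x ∈ Set.Icc (-1) 1 ∧ 0 ≤ ω x := by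
  obtain ⟨d, ρ, M, O, v, hρ, hρ1, -, hM₁, hM₂, -, -, hv, hO, hE, hω⟩ := h
  have hv' : star v ⬝ᵥ v = 1 := by
    simp only [dotProduct, Pi.star_apply, Complex.star_def, ← Complex.normSq_eq_conj_mul_self]
    exact_mod_cast hv
  have hOpsd : O.PosSemidef := by
    simpa using hO.add (Matrix.posSemidef_one_sub_vecMulVec_self hv')
  have h₁ := (hρ x).trace_mul_nonneg hM₁
  have h₂ := (hρ x).trace_mul_nonneg hM₂
  have h₃ := (hρ x).trace_mul_nonneg hOpsd
  rw [Matrix.mul_sub, Matrix.trace_sub, Matrix.mul_one, hρ1, hE] at h₁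
  rw [Matrix.mul_add, Matrix.trace_add, Matrix.mul_one, hρ1, hE] at h₂
  have h₁' := (Complex.le_def.mp h₁).1
  have h₂' := (Complex.le_def.mp h₂).1
  have h₃' := (Complex.le_def.mp h₃).1
  simp only [Complex.zero_re, Complex.sub_re, Complex.add_re, Complex.one_re,
    Complex.ofReal_re] at h₁' h₂' h₃'
  exact ⟨⟨by linarith, by linarith⟩, h₃'.trans (hω x)⟩

lemma quantumSet_subset_pi_Icc_prod_pi_Ici :
    QuantumSet ⊆ (Set.univ.pi fun _ => Set.Icc (-1) 1) ×ˢ (Set.univ.pi fun _ => Set.Ici 0) := by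
  refine convexHull_min (fun b hb => ?_) ((convex_pi fun _ _ => convex_Icc _ _).prod
    (convex_pi fun _ _ => convex_Ici _))
  exact ⟨fun x _ => (IsQuantumRep.mem_Icc_and_nonneg hb x).1,
    fun x _ => (IsQuantumRep.mem_Icc_and_nonneg hb x).2⟩

theorem sum_mul_sq_le_of_sum_mul_nonpos {Ω : Type*} {s : Finset Ω} {w Y L T : Ω → ℝ}
    {lo hi δ K : ℝ} (hw : ∀ o ∈ s, 0 ≤ w o) (hw1 : ∑ o ∈ s, w o = 1)
    (hY : ∀ o ∈ s, Y o ∈ Set.Icc lo hi) (hL : ∀ o ∈ s, L o ≤ 0)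
    (hL1 : -1 ≤ ∑ o ∈ s, w o * L o) (hL2 : ∑ o ∈ s, w o * L o ^ 2 ≤ K) (hδ : 0 ≤ δ)
    (hT : ∀ o ∈ s, T o = Y o + δ + L o) (hmean : ∑ o ∈ s, w o * T o ≤ 0) :
    ∑ o ∈ s, w o * T o ^ 2 ≤ max (hi ^ 2) (lo ^ 2) + 2 * max (-lo) 0 + K := by
  set EY := ∑ o ∈ s, w o * Y o
  set EL := ∑ o ∈ s, w o * L o
  have hET : ∑ o ∈ s, w o * T o = EY + δ + EL := by
    rw [sum_congr rfl fun o ho => by rw [hT o ho, mul_add, mul_add, mul_comm (w o) δ],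
      sum_add_distrib, sum_add_distrib, ← mul_sum, hw1, mul_one]
  have hET2 : ∑ o ∈ s, w o * T o ^ 2 =
      ∑ o ∈ s, w o * Y o ^ 2 + ∑ o ∈ s, w o * L o ^ 2 + 2 * ∑ o ∈ s, w o * (Y o * L o) +
        δ * (δ + 2 * EY + 2 * EL) := by
    have : ∀ o ∈ s, w o * T o ^ 2 = w o * Y o ^ 2 + w o * L o ^ 2 + 2 * (w o * (Y o * L o)) +
        δ * (δ * w o + 2 * (w o * Y o) + 2 * (w o * L o)) := fun o ho => by rw [hT o ho]; ring
    rw [sum_congr rfl this]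
    simp only [sum_add_distrib, ← mul_sum, hw1]
    ring
  have hY2 : ∑ o ∈ s, w o * Y o ^ 2 ≤ max (hi ^ 2) (lo ^ 2) := by
    calc ∑ o ∈ s, w o * Y o ^ 2 ≤ ∑ o ∈ s, w o * max (hi ^ 2) (lo ^ 2) := by
          refine sum_le_sum fun o ho => mul_le_mul_of_nonneg_left ?_ (hw o ho)
          obtain ⟨h₁, h₂⟩ := hY o ho
          rcases le_total 0 (Y o) with h | h
          · exact le_max_of_le_left (by nlinarith)
          · exact le_max_of_le_right (by nlinarith)
      _ = max (hi ^ 2) (lo ^ 2) := by rw [← sum_mul, hw1, one_mul]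
  have hYL : ∑ o ∈ s, w o * (Y o * L o) ≤ lo * EL := by
    rw [mul_sum]
    refine sum_le_sum fun o ho => ?_
    nlinarith [mul_nonneg (hw o ho) (mul_nonneg (sub_nonneg.2 (hY o ho).1) (neg_nonneg.2 (hL o ho)))]
  have hEL : EL ≤ 0 := sum_nonpos fun o ho => mul_nonpos_of_nonneg_of_nonpos (hw o ho) (hL o ho)
  have hloEL : lo * EL ≤ max (-lo) 0 := by
    rcases le_total 0 lo with h | h
    · exact (mul_nonpos_of_nonneg_of_nonpos h hEL).trans (le_max_right _ _)
    · nlinarith [le_max_left (-lo) 0]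
  have hδEY : δ * (δ + 2 * EY + 2 * EL) ≤ 0 := mul_nonpos_of_nonneg_of_nonpos hδ (by linarith)
  linarith

section BinaryOutcomes

variable {ι : Type*} [Fintype ι]

variable (ι) in
def outcomes : Finset (ℝ × ι) := {1, -1} ×ˢ univ

/-- The joint probability `p(x) p(a|x)` of an outcome, where `p(a|x) = (1 + a Eₓ) / 2`. -/
def jointProb (p E : ι → ℝ) (o : ℝ × ι) : ℝ := p o.2 * ((1 + o.1 * E o.2) / 2)

lemma mem_outcomes {o : ℝ × ι} : o ∈ outcomes ι ↔ o.1 = 1 ∨ o.1 = -1 := by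
  simp [outcomes]

lemma sum_outcomes_jointProb_mul (p E : ι → ℝ) (g : ℝ → ℝ → ι → ℝ) :
    ∑ o ∈ outcomes ι, jointProb p E o * g ((1 + o.1 * E o.2) / 2) o.1 o.2 =
      ∑ x, p x * ((1 + E x) / 2 * g ((1 + E x) / 2) 1 x +
        (1 - E x) / 2 * g ((1 - E x) / 2) (-1) x) := by
  rw [outcomes, sum_product, sum_pair (by norm_num), ← sum_add_distrib]
  refine sum_congr rfl fun x _ => ?_
  simp only [jointProb, one_mul, neg_one_mul, ← sub_eq_add_neg]
  ring

lemma condProb_mem_Icc {a e : ℝ} (ha : a = 1 ∨ a = -1) (he : e ∈ Set.Icc (-1) 1) :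
    (1 + a * e) / 2 ∈ Set.Icc 0 1 := by
  obtain ⟨h₁, h₂⟩ := he
  rcases ha with rfl | rfl <;> constructor <;> linarith

variable {p E : ι → ℝ}

lemma jointProb_nonneg (hp : ∀ x, 0 ≤ p x) (hE : ∀ x, E x ∈ Set.Icc (-1) 1) {o : ℝ × ι}
    (ho : o ∈ outcomes ι) : 0 ≤ jointProb p E o :=
  mul_nonneg (hp _) (condProb_mem_Icc (mem_outcomes.1 ho) (hE _)).1

lemma sum_jointProb (hp : ∑ x, p x = 1) : ∑ o ∈ outcomes ι, jointProb p E o = 1 := by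
  simpa [← add_div, hp] using sum_outcomes_jointProb_mul p E fun _ _ _ => 1

lemma neg_one_le_sum_jointProb_mul_logb (hp₀ : ∀ x, 0 ≤ p x) (hp : ∑ x, p x = 1) :
    -1 ≤ ∑ o ∈ outcomes ι, jointProb p E o * Real.logb 2 ((1 + o.1 * E o.2) / 2) :=
  calc -1 = ∑ x, p x * (-1) := by rw [← sum_mul, hp]; ring
    _ ≤ ∑ x, p x * ((1 + E x) / 2 * Real.logb 2 ((1 + E x) / 2) +
          (1 - E x) / 2 * Real.logb 2 ((1 - E x) / 2)) := by
      refine sum_le_sum fun x _ => mul_le_mul_of_nonneg_left ?_ (hp₀ x)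
      linarith [Real.neg_mul_logb_two_add_mul_logb_two_le_one
        (show (1 + E x) / 2 + (1 - E x) / 2 = 1 by ring)]
    _ = _ := (sum_outcomes_jointProb_mul p E fun q _ _ => Real.logb 2 q).symm

lemma sum_jointProb_mul_logb_sq_le (hp₀ : ∀ x, 0 ≤ p x) (hp : ∑ x, p x = 1)
    (hE : ∀ x, E x ∈ Set.Icc (-1) 1) :
    ∑ o ∈ outcomes ι, jointProb p E o * Real.logb 2 ((1 + o.1 * E o.2) / 2) ^ 2 ≤
      8 / Real.exp 1 ^ 2 * Real.logb 2 (Real.exp 1) ^ 2 :=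
  calc _ = ∑ x, p x * ((1 + E x) / 2 * Real.logb 2 ((1 + E x) / 2) ^ 2 +
          (1 - E x) / 2 * Real.logb 2 ((1 - E x) / 2) ^ 2) :=
        sum_outcomes_jointProb_mul p E fun q _ _ => Real.logb 2 q ^ 2
    _ ≤ ∑ x, p x * (8 / Real.exp 1 ^ 2 * Real.logb 2 (Real.exp 1) ^ 2) := by
      refine sum_le_sum fun x _ => mul_le_mul_of_nonneg_left ?_ (hp₀ x)
      obtain ⟨h₁, h₂⟩ := hE x
      have hq₁ := Real.mul_logb_sq_le 2 (q := (1 + E x) / 2) (by linarith) (by linarith)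
      have hq₂ := Real.mul_logb_sq_le 2 (q := (1 - E x) / 2) (by linarith) (by linarith)
      linear_combination hq₁ + hq₂
    _ = _ := by rw [← sum_mul, hp, one_mul]

end BinaryOutcomes

section TradeOff

variable {p ωpk α β γ E ω : Fin 2 → ℝ}

lemma xiFun_mem_Icc {a : ℝ} (ha : a = 1 ∨ a = -1) (x : Fin 2) :
    xiFun p α β a x ∈ Set.Icc (xiMinus p α β) (xiPlus p α β) := by
  rcases ha with rfl | rfl <;> fin_cases x <;> simp [xiMinus, xiPlus]

lemma sum_jointProb_mul_xiFun (hp : ∀ x, p x ≠ 0) :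
    ∑ o ∈ outcomes (Fin 2), jointProb p E o * xiFun p α β o.1 o.2 =
      ∑ x, (α x + β x * E x) :=
  (sum_outcomes_jointProb_mul p E fun _ a x => xiFun p α β a x).trans <|
    sum_congr rfl fun x _ => by have := hp x; simp only [xiFun]; field_simp; ring

lemma hent_eq_neg_sum_jointProb_mul_logb :
    Hent p E =
      -∑ o ∈ outcomes (Fin 2), jointProb p E o * Real.logb 2 ((1 + o.1 * E o.2) / 2) :=
  congrArg Neg.neg (sum_outcomes_jointProb_mul p E fun q _ _ => Real.logb 2 q).symm

lemma IsTF.sum_jointProb_mul_nonpos (hTF : IsTF p ωpk α β γ) (hQ : (E, ω) ∈ QuantumSetPk ωpk)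
    (hp : ∀ x, p x ≠ 0) (hpsum : ∑ x, p x = 1) :
    ∑ o ∈ outcomes (Fin 2), jointProb p E o *
      (xiFun p α β o.1 o.2 + ∑ y, γ y * ω y + Real.logb 2 ((1 + o.1 * E o.2) / 2)) ≤ 0 := by
  have h := hTF.2 E ω hQ
  rw [hent_eq_neg_sum_jointProb_mul_logb] at h
  simp only [mul_add, sum_add_distrib, ← sum_mul, sum_jointProb hpsum, one_mul,
    sum_jointProb_mul_xiFun hp, Fin.sum_univ_two] at h ⊢
  linarith

end TradeOff

theorem variance_and_sup_T_bound (p ωpk α β γ E ω : Fin 2 → ℝ)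
    (hp : ∀ x, 0 < p x) (hpsum : p 0 + p 1 = 1)
    (hpk1 : ∀ x, ωpk x ≤ 1)
    (hTF : IsTF p ωpk α β γ)
    (hQ : (E, ω) ∈ QuantumSetPk ωpk) :
    (∑ x, p x *
        (((1 + E x) / 2) *
            (xiFun p α β 1 x + (∑ y, γ y * ω y) + Real.logb 2 ((1 + E x) / 2)) ^ 2 +
          ((1 - E x) / 2) *
            (xiFun p α β (-1) x + (∑ y, γ y * ω y) + Real.logb 2 ((1 - E x) / 2)) ^ 2) ≤
      Vbound p α β γ) ∧
    (∀ a : ℝ, (a = 1 ∨ a = -1) → ∀ x : Fin 2, 0 < (1 + a * E x) / 2 →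
      xiFun p α β a x + (∑ y, γ y * ω y) + Real.logb 2 ((1 + a * E x) / 2) ≤
        xiPlus p α β) := by
  obtain ⟨hE, hω⟩ := quantumSet_subset_pi_Icc_prod_pi_Ici hQ.1
  replace hE : ∀ x, E x ∈ Set.Icc (-1) 1 := fun x => hE x trivial
  have hp₁ : ∑ x, p x = 1 := by rwa [Fin.sum_univ_two]
  refine ⟨?_, fun a ha x hx => ?_⟩
  · have hδ : 0 ≤ ∑ y, γ y * ω y - (γ 0 + γ 1) := by
      simp only [Fin.sum_univ_two]
      nlinarith [hTF.1 0, hTF.1 1, (hQ.2 0).trans (hpk1 0), (hQ.2 1).trans (hpk1 1)]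
    refine (sum_outcomes_jointProb_mul p E fun q a x =>
      (xiFun p α β a x + ∑ y, γ y * ω y + Real.logb 2 q) ^ 2).symm.trans_le ?_
    refine sum_mul_sq_le_of_sum_mul_nonpos (Y := fun o => xiFun p α β o.1 o.2 + (γ 0 + γ 1))
      (fun o ho => jointProb_nonneg (fun x => (hp x).le) hE ho) (sum_jointProb hp₁)
      (fun o ho => ?_) (fun o ho => ?_) (neg_one_le_sum_jointProb_mul_logb (fun x => (hp x).le) hp₁)
      (sum_jointProb_mul_logb_sq_le (fun x => (hp x).le) hp₁ hE) hδ (fun o _ => by ring)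
      (hTF.sum_jointProb_mul_nonpos hQ (fun x => (hp x).ne') hp₁)
    · obtain ⟨h₁, h₂⟩ := xiFun_mem_Icc (mem_outcomes.1 ho) o.2 (p := p) (α := α) (β := β)
      constructor <;> linarith
    · obtain ⟨h₀, h₁⟩ := condProb_mem_Icc (mem_outcomes.1 ho) (hE o.2)
      exact Real.logb_nonpos one_lt_two h₀ h₁
  · have hγω : ∑ y, γ y * ω y ≤ 0 :=
      sum_nonpos fun y _ => mul_nonpos_of_nonpos_of_nonneg (hTF.1 y) (hω y trivial)
    have hlog := Real.logb_nonpos one_lt_two hx.le (condProb_mem_Icc ha (hE x)).2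
    linarith [(xiFun_mem_Icc ha x (p := p) (α := α) (β := β)).2]

end
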